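/- Let $X$ be a metric space in which closed bounded balls around $p$ are compact, let $L>0$, and let $\Omega(L)=\{x\in\overline{B_{1.2}(p)}:\limsup_{t\to0}\rho(t,x)>L\}$. Fix $\sigma>0$ and $r>0$, and set $A=\{y\in B_{1.1}(p): d(y,\Omega(L))\ge r\}$. Then there exists $T=T(r,\sigma)>0$ such that $\rho(T,y)<L+\sigma$ for all $y\in A$. -/

import Mathlib

open Metric Filter Topology MeasureTheory
open scoped ENNReal NNReal

noncomputable section

/-- A loop, parametrized by `[0,1]` with equal endpoints, is contractible within the set `S`:
it admits a free homotopy, with image inside `S`, to a constant loop. -/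
def LoopContractibleIn {X : Type*} [TopologicalSpace X] (c : C(unitInterval, X))
    (S : Set X) : Prop :=
  ∃ (H : C(unitInterval × unitInterval, X)) (x₀ : X),
    (∀ t, H (t, 0) = c t) ∧ (∀ t, H (t, 1) = x₀) ∧ (∀ s, H (0, s) = H (1, s)) ∧
    Set.range H ⊆ S

/-- The module of `1`-contractibility `ρ(t,x)`: the infimum of all `ρ ≥ t` such that every
loop in `B_t(x)` is contractible in `B_ρ(x)` (and `∞` if there is no such `ρ`). -/
def contrMod {X : Type*} [PseudoEMetricSpace X] (t : ℝ≥0∞) (x : X) : ℝ≥0∞ :=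
  sInf {ρ : ℝ≥0∞ | t ≤ ρ ∧ ∀ c : C(unitInterval, X), c 0 = c 1 →
    Set.range c ⊆ EMetric.ball x t → LoopContractibleIn c (EMetric.ball x ρ)}

/-- A length metric space: the distance between two points is the infimum of the lengths
of paths joining them. -/
def IsLengthSpace (X : Type*) [PseudoEMetricSpace X] : Prop :=
  ∀ x y : X, edist x y = ⨅ γ : Path x y, eVariationOn (fun t : ℝ => γ.extend t) (Set.Icc 0 1)

/-- An `ε`-Gromov–Hausdorff approximation: `f` distorts distances by at most `ε`
and has `ε`-dense image. -/
def IsGHApprox {A B : Type*} [PseudoMetricSpace A] [PseudoMetricSpace B]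
    (f : A → B) (ε : ℝ) : Prop :=
  (∀ u v : A, |dist (f u) (f v) - dist u v| ≤ ε) ∧ ∀ b : B, ∃ a : A, dist (f a) b ≤ ε

/-- A pointed `ε`-Gromov–Hausdorff approximation. -/
def IsPointedGHApprox {A B : Type*} [PseudoMetricSpace A] [PseudoMetricSpace B]
    (f : A → B) (a : A) (b : B) (ε : ℝ) : Prop :=
  dist (f a) b ≤ ε ∧ IsGHApprox f ε

/-- A pointed `ε`-approximation at scale `R` (distortion and density on `R`-balls around
the base points). -/
def IsPGHApproxOn {A B : Type*} [PseudoMetricSpace A] [PseudoMetricSpace B]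
    (f : A → B) (a : A) (b : B) (R ε : ℝ) : Prop :=
  dist (f a) b ≤ ε ∧
  (∀ u ∈ Metric.closedBall a R, ∀ v ∈ Metric.closedBall a R,
    |dist (f u) (f v) - dist u v| ≤ ε) ∧
  ∀ y ∈ Metric.closedBall b R, ∃ u ∈ Metric.closedBall a R, dist (f u) y ≤ ε

/-- Pointed Gromov–Hausdorff convergence of `(M i, p i)` to `(X, x)`. -/
def PointedGHLim (M : ℕ → Type*) [∀ i, MetricSpace (M i)] (p : ∀ i, M i)
    (X : Type*) [MetricSpace X] (x : X) : Prop :=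
  ∀ R > 0, ∀ ε > 0, ∀ᶠ i in atTop, ∃ f : M i → X, IsPGHApproxOn f (p i) x R ε

/-- Gromov–Hausdorff convergence of a sequence of metric spaces to `X`. -/
def GHLim (M : ℕ → Type*) [∀ i, MetricSpace (M i)] (X : Type*) [MetricSpace X] : Prop :=
  ∀ ε > 0, ∀ᶠ i in atTop, ∃ f : M i → X, IsGHApprox f ε

/-- The comparison function `sn_c` for the space form of constant curvature `c`. -/
def modelSn (c t : ℝ) : ℝ :=
  if 0 < c then Real.sin (Real.sqrt c * t) / Real.sqrt c
  else if c < 0 then Real.sinh (Real.sqrt (-c) * t) / Real.sqrt (-c)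
  else t

/-- The volume of the ball of radius `r` in the `n`-dimensional simply connected space form
of constant curvature `c`. -/
def modelBallVol (n : ℕ) (c r : ℝ) : ℝ :=
  (μH[(n : ℝ) - 1] (Metric.sphere (0 : EuclideanSpace ℝ (Fin n)) 1)).toReal *
    ∫ t in (0:ℝ)..r, modelSn c t ^ (n - 1)

/-- Synthetic stand-in for the Ricci curvature lower bound `Ric ≥ (n-1)c` on an
`n`-dimensional Riemannian manifold: the Bishop–Gromov relative volume comparison with
respect to the `n`-dimensional Hausdorff measure (which is the Riemannian volume). -/
def RicciGE (M : Type*) [MetricSpace M] [MeasurableSpace M] [BorelSpace M]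
    (n : ℕ) (c : ℝ) : Prop :=
  ∀ x : M, ∀ r R : ℝ, 0 < r → r ≤ R →
    μH[(n : ℝ)] (Metric.ball x R) * ENNReal.ofReal (modelBallVol n c r) ≤
      μH[(n : ℝ)] (Metric.ball x r) * ENNReal.ofReal (modelBallVol n c R)

/-- Localized version of `RicciGE`: `Ric ≥ (n-1)c` on the region `s`. -/
def RicciGEOn (M : Type*) [MetricSpace M] [MeasurableSpace M] [BorelSpace M]
    (n : ℕ) (c : ℝ) (s : Set M) : Prop :=
  ∀ x ∈ s, ∀ r R : ℝ, 0 < r → r ≤ R → Metric.ball x R ⊆ s →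
    μH[(n : ℝ)] (Metric.ball x R) * ENNReal.ofReal (modelBallVol n c r) ≤
      μH[(n : ℝ)] (Metric.ball x r) * ENNReal.ofReal (modelBallVol n c R)

/-- The 1-skeleton of a simplicial complex in the plane. -/
def oneSkel (S : Geometry.SimplicialComplex ℝ ℂ) : Set ℂ :=
  ⋃ f ∈ {f ∈ S.faces | f.card ≤ 2}, convexHull ℝ (f : Set ℂ)

/-- Equicontinuity at `0` of a family of functions vanishing at `0`. -/
def EquicontAtZero (F : ℕ → ℝ≥0∞ → ℝ≥0∞) : Prop :=
  ∀ ε : ℝ≥0∞, 0 < ε → ∃ δ : ℝ≥0∞, 0 < δ ∧ ∀ i : ℕ, ∀ t < δ, F i t < ε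

end

/-!
At a point `y` with `limsup_{t→0} ρ(t,y) < M`, some scale `t` has `ρ(t,y) < M' < M`, and the
estimate `ρ(t/2, w) ≤ ρ(t, y) + d(w,y)` keeps `ρ(t/2, ·) < M` on a ball around `y`; since `ρ` is
monotone in `t`, this holds for all smaller scales as well. Covering the compact set
`closedBall p 1.1 ∩ {d(·, Ω(L)) ≥ r}` by finitely many such balls gives a uniform scale.
-/

section ContrMod

variable {X : Type*}

lemma LoopContractibleIn.mono [TopologicalSpace X] {c : C(unitInterval, X)} {S S' : Set X}
    (h : LoopContractibleIn c S) (hSS' : S ⊆ S') : LoopContractibleIn c S' := by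
  obtain ⟨H, x₀, h0, h1, hloop, hrange⟩ := h
  exact ⟨H, x₀, h0, h1, hloop, hrange.trans hSS'⟩

variable [PseudoEMetricSpace X]

lemma contrMod_mono {t t' : ℝ≥0∞} (h : t ≤ t') (x : X) : contrMod t x ≤ contrMod t' x := by
  refine sInf_le_sInf fun ρ ⟨htρ, hρ⟩ => ⟨h.trans htρ, fun c hc hrange => ?_⟩
  exact hρ c hc (hrange.trans (Metric.eball_subset_eball h))

lemma contrMod_le_contrMod_add_edist (t : ℝ≥0∞) (y w : X) :
    contrMod t y ≤ contrMod (t + edist y w) w + edist y w := by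
  by_cases hyw : edist y w = ∞
  · simp [hyw]
  conv_rhs => rw [contrMod, ENNReal.sInf_add]
  refine le_iInf₂ fun ρ ⟨htρ, hρ⟩ => sInf_le ⟨le_self_add.trans (htρ.trans le_self_add), ?_⟩
  intro c hc hrange
  refine (hρ c hc (hrange.trans (Metric.eball_subset (add_comm _ _).le hyw))).mono ?_
  rw [edist_comm] at hyw ⊢
  exact Metric.eball_subset (add_comm _ _).le hyw

lemma eventually_forall_contrMod_lt_of_limsup_lt {y : X} {M : ℝ≥0∞}
    (hy : limsup (fun t => contrMod t y) (𝓝[>] 0) < M) :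
    ∃ U ∈ 𝓝 y, ∀ᶠ T in 𝓝[>] 0, ∀ w ∈ U, contrMod T w < M := by
  obtain ⟨M', hyM', hM'M⟩ := exists_between hy
  obtain ⟨t, ht, htM'⟩ := (eventually_mem_nhdsWithin.and (eventually_lt_of_limsup_lt hyM')).exists
  have ht2 : 0 < t / 2 := ENNReal.div_pos (ne_of_gt ht) ENNReal.ofNat_ne_top
  have hgap : 0 < M - M' := tsub_pos_of_lt hM'M
  refine ⟨Metric.eball y (min (t / 2) (M - M')),
    Metric.eball_mem_nhds y (lt_min ht2 hgap), ?_⟩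
  filter_upwards [Ioo_mem_nhdsGT ht2] with T hT w hw
  have hwy : edist w y < min (t / 2) (M - M') := hw
  calc contrMod T w
      ≤ contrMod (t / 2) w := contrMod_mono hT.2.le w
    _ ≤ contrMod (t / 2 + edist w y) y + edist w y := contrMod_le_contrMod_add_edist _ w y
    _ ≤ contrMod t y + edist w y := by
        refine add_le_add_left (contrMod_mono ?_ y) _
        calc t / 2 + edist w y ≤ t / 2 + t / 2 := by gcongr; exact hwy.le.trans (min_le_left _ _)
          _ = t := ENNReal.add_halves t
    _ < M' + (M - M') := ENNReal.add_lt_add htM' (hwy.trans_le (min_le_right _ _))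
    _ = M := add_tsub_cancel_of_le hM'M.le

theorem IsCompact.exists_pos_forall_contrMod_lt {K : Set X} (hK : IsCompact K) {M : ℝ≥0∞}
    (hM : ∀ y ∈ K, limsup (fun t => contrMod t y) (𝓝[>] 0) < M) :
    ∃ T : ℝ≥0∞, 0 < T ∧ ∀ y ∈ K, contrMod T y < M := by
  have hev : ∀ᶠ T in 𝓝[>] 0, ∀ y ∈ K, contrMod T y < M := by
    refine hK.induction_on (p := fun s => ∀ᶠ T in 𝓝[>] 0, ∀ y ∈ s, contrMod T y < M)
      (by simp) (fun s s' hss' h => h.mono fun T hT y hy => hT y (hss' hy))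
      (fun s s' h h' => (h.and h').mono fun T hT y hy => hy.elim (hT.1 y) (hT.2 y))
      fun y hyK => ?_
    obtain ⟨U, hU, hUM⟩ := eventually_forall_contrMod_lt_of_limsup_lt (hM y hyK)
    exact ⟨U, mem_nhdsWithin_of_mem_nhds hU, hUM⟩
  exact (eventually_mem_nhdsWithin.and hev).exists

end ContrMod

theorem stmt10_general (X : Type) [MetricSpace X] [ProperSpace X] (p : X)
    (L : ℝ≥0∞) (σ : ℝ≥0∞) (hσ : 0 < σ) (r : ℝ) (hr : 0 < r) :
    ∃ T : ℝ≥0∞, 0 < T ∧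
      ∀ y ∈ Metric.ball p 1.1,
        r ≤ Metric.infDist y {x ∈ closure (Metric.ball p 1.2) |
          L < limsup (fun t => contrMod t x) (𝓝[>] (0:ℝ≥0∞))} →
        contrMod T y < L + σ := by
  set Ω := {x ∈ closure (ball p 1.2) | L < limsup (fun t => contrMod t x) (𝓝[>] (0:ℝ≥0∞))}
  set K := closedBall p 1.1 ∩ {y | r ≤ infDist y Ω}
  have hK : IsCompact K := (isCompact_closedBall p 1.1).inter_right
    (isClosed_le continuous_const (continuous_infDist_pt Ω))
  have hlimsup : ∀ y ∈ K, limsup (fun t => contrMod t y) (𝓝[>] 0) < L + σ := by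
    rintro y ⟨hyp, hyr⟩
    have hdist : 0 < infDist y Ω := hr.trans_le hyr
    -- `infDist` to the empty set is `0`, so `Ω` is nonempty, which forces `L < ∞`.
    obtain ⟨x, -, hx⟩ : Ω.Nonempty :=
      Set.nonempty_iff_ne_empty.2 fun h => by simp [h] at hdist
    have hyΩ : y ∉ Ω := fun h => hdist.ne' (infDist_zero_of_mem h)
    have hyL : limsup (fun t => contrMod t y) (𝓝[>] 0) ≤ L := not_lt.1 fun h =>
      hyΩ ⟨subset_closure (closedBall_subset_ball (by norm_num) hyp), h⟩
    exact hyL.trans_lt (ENNReal.lt_add_right hx.ne_top hσ.ne')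
  obtain ⟨T, hT, hTK⟩ := hK.exists_pos_forall_contrMod_lt hlimsup
  exact ⟨T, hT, fun y hy hyr => hTK y ⟨ball_subset_closedBall hy, hyr⟩⟩

/-- uniform control of the module of `1`-contractibility on the annulus
`A = {y ∈ B_{1.1}(p) : d(y, Ω(L)) ≥ r}` away from `Ω(L)`. -/
theorem stmt10 (X : Type) [MetricSpace X] [ProperSpace X] (p : X)
    (L : ℝ≥0∞) (hL : 0 < L) (σ : ℝ≥0∞) (hσ : 0 < σ) (r : ℝ) (hr : 0 < r) :
    ∃ T : ℝ≥0∞, 0 < T ∧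
      ∀ y ∈ Metric.ball p 1.1,
        r ≤ Metric.infDist y {x ∈ closure (Metric.ball p 1.2) |
          L < limsup (fun t => contrMod t x) (𝓝[>] (0:ℝ≥0∞))} →
        contrMod T y < L + σ :=
  stmt10_general X p L σ hσ r hr
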